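/- arXiv:2106.15360 — 2 statements merged into one kernel-verified Lean document; each statement's English description precedes it below -/
import Mathlib

section
/- Let w_1, …, w_m ∈ ℝ^d, let (x_1, y^1), …, (x_n, y^n) be n instances with x_i ∈ ℝ^d and y^i ∈ {−1,1}^m, and let ε ≥ 0. Then (1/n) ∑_{i=1}^n [sup over r ∈ ℝ^d with ‖r‖₂ ≤ ε of ∑_{j=1}^m max(0, 1 − y^i_j ⟨w_j, x_i + r⟩)] ≤ (1/n) ∑_{i=1}^n ∑_{j=1}^m max(0, 1 − y^i_j ⟨w_j, x_i⟩) + (ε/n) ∑_{i=1}^n max over b ∈ {0,1}^m of ‖∑_{j=1}^m b_j y^i_j w_j‖₂. -/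
open scoped RealInnerProductSpace BigOperators

private lemma key_aux {d m : ℕ} (w : Fin m → EuclideanSpace ℝ (Fin d))
    (x : EuclideanSpace ℝ (Fin d)) (y : Fin m → ℝ) (ε : ℝ) (hε : 0 ≤ ε) :
    (⨆ r : {r : EuclideanSpace ℝ (Fin d) // ‖r‖ ≤ ε},
        ∑ j, max 0 (1 - y j * ⟪w j, x + (r : EuclideanSpace ℝ (Fin d))⟫)) ≤
      (∑ j, max 0 (1 - y j * ⟪w j, x⟫)) +
        ε * ⨆ b : Fin m → Bool, ‖∑ j, if b j then y j • w j else 0‖ := by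
  have hne : Nonempty {r : EuclideanSpace ℝ (Fin d) // ‖r‖ ≤ ε} :=
    ⟨⟨0, by simpa using hε⟩⟩
  have hbdd : BddAbove (Set.range fun b : Fin m → Bool =>
      ‖∑ j, if b j then y j • w j else 0‖) := (Set.finite_range _).bddAbove
  apply ciSup_le
  intro r
  have hsplit : ∀ j, max 0 (1 - y j * ⟪w j, x + (r : EuclideanSpace ℝ (Fin d))⟫) ≤
      max 0 (1 - y j * ⟪w j, x⟫) + max 0 (-(y j * ⟪w j, (r : EuclideanSpace ℝ (Fin d))⟫)) := by
    intro j
    have habs : ∀ a c : ℝ, max 0 (a + c) ≤ max 0 a + max 0 c := fun a c =>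
      max_le (by positivity) (add_le_add (le_max_right 0 a) (le_max_right 0 c))
    rw [inner_add_right, mul_add]
    have hre : (1 : ℝ) - (y j * ⟪w j, x⟫ + y j * ⟪w j, (r : EuclideanSpace ℝ (Fin d))⟫) =
        (1 - y j * ⟪w j, x⟫) + (-(y j * ⟪w j, (r : EuclideanSpace ℝ (Fin d))⟫)) := by ring
    rw [hre]
    exact habs _ _
  calc ∑ j, max 0 (1 - y j * ⟪w j, x + (r : EuclideanSpace ℝ (Fin d))⟫)
      ≤ ∑ j, (max 0 (1 - y j * ⟪w j, x⟫)
          + max 0 (-(y j * ⟪w j, (r : EuclideanSpace ℝ (Fin d))⟫))) :=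
        Finset.sum_le_sum fun j _ => hsplit j
    _ = (∑ j, max 0 (1 - y j * ⟪w j, x⟫))
          + ∑ j, max 0 (-(y j * ⟪w j, (r : EuclideanSpace ℝ (Fin d))⟫)) :=
        Finset.sum_add_distrib
    _ ≤ (∑ j, max 0 (1 - y j * ⟪w j, x⟫)) +
          ε * ⨆ b : Fin m → Bool, ‖∑ j, if b j then y j • w j else 0‖ := by
        gcongr _ + ?_
        set b : Fin m → Bool := fun j => decide (y j * ⟪w j, (r : EuclideanSpace ℝ (Fin d))⟫ < 0)
          with hb
        have h1 : ∑ j, max 0 (-(y j * ⟪w j, (r : EuclideanSpace ℝ (Fin d))⟫)) =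
            -⟪∑ j, if b j then y j • w j else 0, (r : EuclideanSpace ℝ (Fin d))⟫ := by
          rw [sum_inner, ← Finset.sum_neg_distrib]
          refine Finset.sum_congr rfl fun j _ => ?_
          by_cases hj : y j * ⟪w j, (r : EuclideanSpace ℝ (Fin d))⟫ < 0
          · rw [max_eq_right (by linarith),
              if_pos (show b j = true from decide_eq_true hj),
              real_inner_smul_left]
          · rw [max_eq_left (by push_neg at hj; linarith),
              if_neg (show ¬ b j = true from fun h => hj (of_decide_eq_true h)),
              inner_zero_left, neg_zero]
        rw [h1]
        have h2 : -⟪∑ j, if b j then y j • w j else 0, (r : EuclideanSpace ℝ (Fin d))⟫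
            ≤ ‖∑ j, if b j then y j • w j else 0‖ * ‖(r : EuclideanSpace ℝ (Fin d))‖ := by
          have ha := abs_real_inner_le_norm (∑ j, if b j then y j • w j else 0)
            (r : EuclideanSpace ℝ (Fin d))
          have hn := neg_abs_le (⟪∑ j, if b j then y j • w j else 0,
            (r : EuclideanSpace ℝ (Fin d))⟫)
          linarith
        refine h2.trans ?_
        rw [mul_comm ε]
        gcongr
        · exact le_trans (norm_nonneg _) (le_ciSup hbdd b)
        · exact le_ciSup hbdd b
        · exact r.2

/-- Empirical adversarial risk bound (deterministic form of Eq. (4) of Theorem 1):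
the empirical adversarial hinge risk over `n` instances is at most the empirical
adversarial-free hinge risk plus `ε/n` times the sum of the per-instance
transferability quantities `C_{W,zᵢ}`. -/
theorem empirical_adversarial_risk_le_clean_add_transferability
    {d m n : ℕ} (w : Fin m → EuclideanSpace ℝ (Fin d))
    (x : Fin n → EuclideanSpace ℝ (Fin d)) (y : Fin n → Fin m → ℝ)
    (hy : ∀ i j, y i j = 1 ∨ y i j = -1) (ε : ℝ) (hε : 0 ≤ ε) :
    (1 / n) * ∑ i, (⨆ r : {r : EuclideanSpace ℝ (Fin d) // ‖r‖ ≤ ε},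
        ∑ j, max 0 (1 - y i j * ⟪w j, x i + (r : EuclideanSpace ℝ (Fin d))⟫)) ≤
      (1 / n) * (∑ i, ∑ j, max 0 (1 - y i j * ⟪w j, x i⟫)) +
        (ε / n) * ∑ i, ⨆ b : Fin m → Bool, ‖∑ j, if b j then y i j • w j else 0‖ := by
  have hsum : ∑ i, (⨆ r : {r : EuclideanSpace ℝ (Fin d) // ‖r‖ ≤ ε},
        ∑ j, max 0 (1 - y i j * ⟪w j, x i + (r : EuclideanSpace ℝ (Fin d))⟫)) ≤
      (∑ i, ∑ j, max 0 (1 - y i j * ⟪w j, x i⟫)) +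
        ε * ∑ i, ⨆ b : Fin m → Bool, ‖∑ j, if b j then y i j • w j else 0‖ := by
    rw [Finset.mul_sum, ← Finset.sum_add_distrib]
    exact Finset.sum_le_sum fun i _ => key_aux w (x i) (y i) ε hε
  have hn : (0:ℝ) ≤ 1 / n := by positivity
  calc (1 / n : ℝ) * ∑ i, (⨆ r : {r : EuclideanSpace ℝ (Fin d) // ‖r‖ ≤ ε},
        ∑ j, max 0 (1 - y i j * ⟪w j, x i + (r : EuclideanSpace ℝ (Fin d))⟫))
      ≤ (1 / n) * ((∑ i, ∑ j, max 0 (1 - y i j * ⟪w j, x i⟫)) +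
        ε * ∑ i, ⨆ b : Fin m → Bool, ‖∑ j, if b j then y i j • w j else 0‖) :=
        mul_le_mul_of_nonneg_left hsum hn
    _ = _ := by ring
end

section
/- Let v_1, …, v_m be vectors in the Euclidean space ℝ^d and let ε ≥ 0. Then the supremum over all r ∈ ℝ^d with ‖r‖₂ ≤ ε of ∑_{j=1}^m max(0, ⟨r, v_j⟩) equals ε times the maximum over b ∈ {0,1}^m of ‖∑_{j=1}^m b_j v_j‖₂. -/
open scoped RealInnerProductSpace BigOperators

/-!
For a fixed `r`, the sum `∑ j, max 0 ⟪r, v j⟫` is `⟪r, ∑_{j ∈ B} v j⟫` for the set `B` of labels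
with positive score, and it dominates `⟪r, ∑_{j ∈ B'} v j⟫` for every other set `B'`.
Cauchy–Schwarz then bounds the left-hand side by `ε` times the largest subset-sum norm, and the
bound is attained at `r = (ε / ‖s‖) • s`, where `s` is a subset sum of largest norm.
-/

section

variable {ι E : Type*} [Fintype ι] [NormedAddCommGroup E] [InnerProductSpace ℝ E]

theorem inner_sum_ite_le_sum_max_zero_inner (v : ι → E) (r : E) (b : ι → Bool) :
    ⟪r, ∑ j, if b j then v j else 0⟫ ≤ ∑ j, max 0 ⟪r, v j⟫ := by
  rw [inner_sum]
  refine Finset.sum_le_sum fun j _ => ?_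
  cases b j
  · simp
  · exact le_max_right _ _

theorem exists_sum_max_zero_inner_eq_inner_sum_ite (v : ι → E) (r : E) :
    ∃ b : ι → Bool, ∑ j, max 0 ⟪r, v j⟫ = ⟪r, ∑ j, if b j then v j else 0⟫ := by
  refine ⟨fun j => decide (0 < ⟪r, v j⟫), ?_⟩
  rw [inner_sum]
  refine Finset.sum_congr rfl fun j _ => ?_
  by_cases h : 0 < ⟪r, v j⟫
  · simp [h, h.le]
  · simp [h, not_lt.mp h]

theorem sum_max_zero_inner_le_norm_mul_iSup (v : ι → E) (r : E) :
    ∑ j, max 0 ⟪r, v j⟫ ≤ ‖r‖ * ⨆ b : ι → Bool, ‖∑ j, if b j then v j else 0‖ := by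
  obtain ⟨b, hb⟩ := exists_sum_max_zero_inner_eq_inner_sum_ite v r
  calc ∑ j, max 0 ⟪r, v j⟫ = ⟪r, ∑ j, if b j then v j else 0⟫ := hb
    _ ≤ ‖r‖ * ‖∑ j, if b j then v j else 0‖ := real_inner_le_norm _ _
    _ ≤ ‖r‖ * ⨆ b : ι → Bool, ‖∑ j, if b j then v j else 0‖ := by
      gcongr
      exact le_ciSup (f := fun b : ι → Bool => ‖∑ j, if b j then v j else 0‖)
        (Finite.bddAbove_range _) b

theorem exists_norm_le_inner_eq_mul_norm (s : E) {ε : ℝ} (hε : 0 ≤ ε) :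
    ∃ r : E, ‖r‖ ≤ ε ∧ ⟪r, s⟫ = ε * ‖s‖ := by
  rcases eq_or_ne s 0 with rfl | hs
  · exact ⟨0, by simpa using hε, by simp⟩
  have hs' : 0 < ‖s‖ := norm_pos_iff.mpr hs
  refine ⟨(ε / ‖s‖) • s, ?_, ?_⟩
  · rw [norm_smul, Real.norm_of_nonneg (by positivity), div_mul_cancel₀ _ hs'.ne']
  · rw [real_inner_smul_left, real_inner_self_eq_norm_mul_norm]
    field_simp

end

/-- The worst-case total positive perturbation of `m` linear scores under an
`ℓ₂`-bounded input perturbation of size `ε` equals `ε` times the combinatorial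
maximum over subsets of labels of the Euclidean norm of the summed vectors. -/
theorem sup_sum_posPart_inner_ball_eq_max_subset_sum_norm
    {d m : ℕ} (v : Fin m → EuclideanSpace ℝ (Fin d)) (ε : ℝ) (hε : 0 ≤ ε) :
    (⨆ r : {r : EuclideanSpace ℝ (Fin d) // ‖r‖ ≤ ε},
        ∑ j, max 0 ⟪(r : EuclideanSpace ℝ (Fin d)), v j⟫) =
      ε * ⨆ b : Fin m → Bool, ‖∑ j, if b j then v j else 0‖ := by
  set M := ⨆ b : Fin m → Bool, ‖∑ j, if b j then v j else 0‖
  have hM : 0 ≤ M := Real.iSup_nonneg fun _ => norm_nonneg _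
  have hle (r : {r : EuclideanSpace ℝ (Fin d) // ‖r‖ ≤ ε}) :
      ∑ j, max 0 ⟪(r : EuclideanSpace ℝ (Fin d)), v j⟫ ≤ ε * M :=
    (sum_max_zero_inner_le_norm_mul_iSup v r).trans (by gcongr; exact r.2)
  have : Nonempty {r : EuclideanSpace ℝ (Fin d) // ‖r‖ ≤ ε} := ⟨⟨0, by simpa using hε⟩⟩
  refine le_antisymm (ciSup_le hle) ?_
  obtain ⟨b, hb⟩ := exists_eq_ciSup_of_finite (f := fun b : Fin m → Bool =>
    ‖∑ j, if b j then v j else 0‖)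
  obtain ⟨r, hr, hrs⟩ := exists_norm_le_inner_eq_mul_norm (∑ j, if b j then v j else 0) hε
  calc ε * M = ⟪r, ∑ j, if b j then v j else 0⟫ := by rw [hrs, hb]
    _ ≤ ∑ j, max 0 ⟪r, v j⟫ := inner_sum_ite_le_sum_max_zero_inner v r b
    _ ≤ _ := le_ciSup ⟨ε * M, Set.forall_mem_range.2 hle⟩ (⟨r, hr⟩ : {r // ‖r‖ ≤ ε})
end
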